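/- Let log : (k^{>0},·) → (k,+) be an order-preserving group embedding and l a prelogarithmic section of k((G)). Then the map L defined by L(α) := l(g) + log(a) + Σ_{i≥1}(−1)^{i−1}ε^i/i, where α = g·a·(1+ε) with g = v(α), a ∈ k^{>0}, ε ∈ k((G^{<1})), is an order-preserving group embedding L : (k((G))^{>0},·) → (k((G)),+), and it is the unique such embedding that extends log on k^{>0}, agrees with l on G, and agrees with the logarithm on 1-units on 1 + k((G^{<1})). -/

import Mathlib

/-! Common framework: fields of generalized power series `k((G))` over a multiplicative
linearly ordered abelian group `G`, realized as Mathlib Hahn series over the additive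
order-dual of `G` (so that anti well-ordered supports in `G` become partially
well-ordered supports), with the anti-lexicographic order. -/

noncomputable section
open HahnSeries
open scoped Classical

/-- The additive order-dual copy of the multiplicative group `G`:
anti well-ordered subsets of `G` correspond to well-ordered subsets of `gdual G`. -/
abbrev gdual (G : Type*) [CommGroup G] [LinearOrder G] [IsOrderedMonoid G] : Type _ := Additive Gᵒᵈ

/-- View an element of `G` as an exponent (element of `gdual G`). -/
def toGd {G : Type*} [CommGroup G] [LinearOrder G] [IsOrderedMonoid G] (g : G) : gdual G :=
  Additive.ofMul (OrderDual.toDual g)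

/-- View an exponent (element of `gdual G`) as an element of `G`. -/
def toG {G : Type*} [CommGroup G] [LinearOrder G] [IsOrderedMonoid G] (γ : gdual G) : G :=
  OrderDual.ofDual (Additive.toMul γ)

section HahnOrder

variable {k : Type*} [Field k] [LinearOrder k] [IsStrictOrderedRing k] {Γ' : Type*} [LinearOrder Γ']

theorem hahn_leadingCoeff_of_ne {x : HahnSeries Γ' k} (hx : x ≠ 0) :
    x.leadingCoeff = x.coeff (x.isWF_support.min (HahnSeries.support_nonempty_iff.2 hx)) := by
  rw [HahnSeries.leadingCoeff_of_ne_zero hx]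
  congr 1
  rw [WithTop.untop_eq_iff]
  simp [HahnSeries.orderTop, hx]

theorem hahn_leadingCoeff_neg (x : HahnSeries Γ' k) : (-x).leadingCoeff = -x.leadingCoeff := by
  by_cases h : x = 0
  · simp [h]
  · have hn : (-x) ≠ 0 := neg_ne_zero.2 h
    rw [hahn_leadingCoeff_of_ne h, hahn_leadingCoeff_of_ne hn]
    have hmin : (-x).isWF_support.min (HahnSeries.support_nonempty_iff.2 hn)
        = x.isWF_support.min (HahnSeries.support_nonempty_iff.2 h) := by
      apply le_antisymm
      · exact Set.IsWF.min_le _ _ (by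
          rw [HahnSeries.support_neg (x := x)]
          exact x.isWF_support.min_mem (HahnSeries.support_nonempty_iff.2 h))
      · refine Set.IsWF.min_le _ _ ?_
        rw [← HahnSeries.support_neg (x := x)]
        exact (-x).isWF_support.min_mem (HahnSeries.support_nonempty_iff.2 hn)
    rw [hmin, HahnSeries.coeff_neg]

theorem hahn_leadingCoeff_add_pos {a b : HahnSeries Γ' k}
    (ha : 0 < a.leadingCoeff) (hb : 0 < b.leadingCoeff) : 0 < (a + b).leadingCoeff := by
  have key : ∀ x y : HahnSeries Γ' k, 0 < x.leadingCoeff → 0 < y.leadingCoeff →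
      ∀ (hx0 : x ≠ 0) (hy0 : y ≠ 0),
      x.isWF_support.min (HahnSeries.support_nonempty_iff.2 hx0) ≤
        y.isWF_support.min (HahnSeries.support_nonempty_iff.2 hy0) →
      0 < (x + y).leadingCoeff := by
    intro x y hx hy hx0 hy0 hle
    set mx := x.isWF_support.min (HahnSeries.support_nonempty_iff.2 hx0) with hmx
    set my := y.isWF_support.min (HahnSeries.support_nonempty_iff.2 hy0) with hmy
    have hcx : x.coeff mx = x.leadingCoeff := (hahn_leadingCoeff_of_ne hx0).symm
    have hcoeff : 0 < (x + y).coeff mx := by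
      rcases lt_or_eq_of_le hle with hlt | heq
      · have hny : y.coeff mx = 0 := by
          by_contra hc
          exact absurd (Set.IsWF.min_le _ _ (by rwa [HahnSeries.mem_support])) (not_le.2 hlt)
        rw [HahnSeries.coeff_add, hny, add_zero, hcx]; exact hx
      · have hcy : y.coeff mx = y.leadingCoeff := by
          rw [heq]; exact (hahn_leadingCoeff_of_ne hy0).symm
        rw [HahnSeries.coeff_add, hcx, hcy]; exact add_pos hx hy
    have hmem : mx ∈ (x + y).support := by
      rw [HahnSeries.mem_support]; exact ne_of_gt hcoeff
    have hxy0 : x + y ≠ 0 := HahnSeries.support_nonempty_iff.1 ⟨mx, hmem⟩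
    have hminxy : (x + y).isWF_support.min (HahnSeries.support_nonempty_iff.2 hxy0) = mx := by
      apply le_antisymm (Set.IsWF.min_le _ _ hmem)
      have hmm := (x + y).isWF_support.min_mem (HahnSeries.support_nonempty_iff.2 hxy0)
      rcases HahnSeries.support_add_subset _ _ hmm with hmem' | hmem'
      · exact Set.IsWF.min_le _ _ hmem'
      · exact le_trans hle (Set.IsWF.min_le _ _ hmem')
    rw [hahn_leadingCoeff_of_ne hxy0, hminxy]
    exact hcoeff
  have ha0 : a ≠ 0 := by intro h; rw [h] at ha; simp at ha
  have hb0 : b ≠ 0 := by intro h; rw [h] at hb; simp at hb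
  rcases le_total (a.isWF_support.min (HahnSeries.support_nonempty_iff.2 ha0))
      (b.isWF_support.min (HahnSeries.support_nonempty_iff.2 hb0)) with hle | hle
  · exact key a b ha hb ha0 hb0 hle
  · rw [add_comm]; exact key b a hb ha hb0 ha0 hle

/-- The anti-lexicographic linear order on generalized power series:
`x` is positive iff its leading coefficient (the coefficient at the valuation `v x`,
i.e. at the largest element of the support) is positive. -/
instance instHahnLinearOrder : LinearOrder (HahnSeries Γ' k) where
  le x y := x = y ∨ 0 < (y - x).leadingCoeff
  lt x y := 0 < (y - x).leadingCoeff
  le_refl x := Or.inl rfl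
  le_trans x y z hxy hyz := by
    rcases hxy with rfl | hxy
    · exact hyz
    rcases hyz with rfl | hyz
    · exact Or.inr hxy
    · refine Or.inr ?_
      have := hahn_leadingCoeff_add_pos hyz hxy
      rwa [sub_add_sub_cancel] at this
  le_antisymm x y hxy hyx := by
    rcases hxy with rfl | hxy
    · rfl
    rcases hyx with rfl | hyx
    · rfl
    · exfalso
      have h1 : (x - y).leadingCoeff = -(y - x).leadingCoeff := by
        rw [← hahn_leadingCoeff_neg, neg_sub]
      rw [h1] at hyx
      exact absurd hxy (not_lt.2 (le_of_lt (neg_pos.1 hyx)))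
  lt_iff_le_not_ge x y := by
    constructor
    · intro h
      refine ⟨Or.inr h, ?_⟩
      rintro (rfl | h')
      · change 0 < (y - y).leadingCoeff at h
        rw [sub_self] at h
        simp at h
      · have h1 : (x - y).leadingCoeff = -(y - x).leadingCoeff := by
          rw [← hahn_leadingCoeff_neg, neg_sub]
        rw [h1] at h'
        exact absurd h (not_lt.2 (le_of_lt (neg_pos.1 h')))
    · rintro ⟨hle, hnot⟩
      rcases hle with rfl | h
      · exact absurd (Or.inl rfl) hnot
      · exact h
  le_total x y := by
    by_cases h : x = y
    · exact Or.inl (Or.inl h)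
    · have h0 : y - x ≠ 0 := sub_ne_zero.2 (Ne.symm h)
      have hlc : (y - x).leadingCoeff ≠ 0 := HahnSeries.leadingCoeff_ne_zero.2 h0
      rcases lt_or_gt_of_ne hlc with hneg | hpos
      · refine Or.inr (Or.inr ?_)
        rw [show x - y = -(y - x) from (neg_sub y x).symm, hahn_leadingCoeff_neg]
        exact neg_pos.2 hneg
      · exact Or.inl (Or.inr hpos)
  toDecidableLE := fun _ _ => Classical.dec _

/-- With the anti-lexicographic order, `k((G))` is a linearly ordered abelian group. -/
instance instHahnLOACG : IsOrderedAddMonoid (HahnSeries Γ' k) where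
  add_le_add_left := by
    intro x y hxy c
    rcases hxy with rfl | h
    · exact le_refl _
    · exact Or.inr (by first | rwa [add_sub_add_left_eq_sub] | rwa [add_sub_add_right_eq_sub])

theorem hahn_lt_iff (x y : HahnSeries Γ' k) : x < y ↔ 0 < (y - x).leadingCoeff := Iff.rfl

theorem hahn_single_pos (a : Γ') : (0 : HahnSeries Γ' k) < HahnSeries.single a 1 := by
  rw [hahn_lt_iff, sub_zero, HahnSeries.leadingCoeff_of_single]
  exact one_pos

theorem hahn_single_lt_single {a b : Γ'} (hab : b < a) :
    (HahnSeries.single a 1 : HahnSeries Γ' k) < HahnSeries.single b 1 := by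
  rw [hahn_lt_iff]
  set δ : HahnSeries Γ' k := HahnSeries.single b 1 - HahnSeries.single a 1 with hδdef
  have hne : b ≠ a := ne_of_lt hab
  have hb : δ.coeff b = 1 := by
    rw [hδdef, HahnSeries.coeff_sub, HahnSeries.coeff_single_same,
      HahnSeries.coeff_single_of_ne hne, sub_zero]
  have hbmem : b ∈ δ.support := by rw [HahnSeries.mem_support, hb]; exact one_ne_zero
  have hδ : δ ≠ 0 := HahnSeries.support_nonempty_iff.1 ⟨b, hbmem⟩
  have hsub : δ.support ⊆ {b, a} := by
    intro γ hγ
    rw [HahnSeries.mem_support] at hγ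
    by_contra hγ'
    simp only [Set.mem_insert_iff, Set.mem_singleton_iff, not_or] at hγ'
    apply hγ
    rw [hδdef, HahnSeries.coeff_sub, HahnSeries.coeff_single_of_ne hγ'.1,
      HahnSeries.coeff_single_of_ne hγ'.2, sub_zero]
  have hmin : δ.isWF_support.min (HahnSeries.support_nonempty_iff.2 hδ) = b := by
    have hmem := δ.isWF_support.min_mem (HahnSeries.support_nonempty_iff.2 hδ)
    have hle := δ.isWF_support.min_le (HahnSeries.support_nonempty_iff.2 hδ) hbmem
    rcases hsub hmem with h | h
    · exact h
    · exact absurd (h ▸ hle) (not_le.2 hab)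
  rw [hahn_leadingCoeff_of_ne hδ, hmin, hb]
  exact one_pos

end HahnOrder

section Series

variable {k : Type*} [Field k] [LinearOrder k] [IsStrictOrderedRing k] {G : Type*} [CommGroup G] [LinearOrder G] [IsOrderedMonoid G]

/-- The summable family `n ↦ (-1)^n/(n+1) • ε^(n+1)` (`ε` of positive order). -/
def logFamily (ε : HahnSeries (gdual G) k) (hε : 0 < ε.orderTop) :
    HahnSeries.SummableFamily (gdual G) k ℕ where
  toFun n := ((-1 : k) ^ n / ((n : k) + 1)) • ε ^ (n + 1)
  isPWO_iUnion_support' := by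
    refine ((HahnSeries.SummableFamily.powers ε).isPWO_iUnion_support).mono ?_
    intro γ hγ
    rw [Set.mem_iUnion] at hγ ⊢
    obtain ⟨n, hn⟩ := hγ
    refine ⟨n + 1, ?_⟩
    rw [HahnSeries.mem_support] at hn ⊢
    intro h
    apply hn
    show (((-1 : k) ^ n / ((n : k) + 1)) • ε ^ (n + 1)).coeff γ = 0
    rw [HahnSeries.coeff_smul]
    show ((-1 : k) ^ n / ((n : k) + 1)) • (ε ^ (n + 1)).coeff γ = 0
    rw [show (ε ^ (n + 1)).coeff γ = 0 by
        rw [← HahnSeries.SummableFamily.powers_of_orderTop_pos hε]; exact h, smul_zero]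
  finite_co_support' g := by
    have h := (HahnSeries.SummableFamily.powers ε).finite_co_support g
    refine Set.Finite.subset (h.preimage (Set.injOn_of_injective Nat.succ_injective)) ?_
    intro n hn
    simp only [Set.mem_preimage, Set.mem_setOf_eq] at hn ⊢
    intro h0
    apply hn
    show (((-1 : k) ^ n / ((n : k) + 1)) • ε ^ (n + 1)).coeff g = 0
    rw [HahnSeries.coeff_smul]
    have : ((HahnSeries.SummableFamily.powers ε) (Nat.succ n)).coeff g = 0 := h0
    rw [show (ε ^ (n + 1)).coeff g = 0 by
        rw [← HahnSeries.SummableFamily.powers_of_orderTop_pos hε]; exact this, smul_zero]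

/-- The logarithm on 1-units: `1 + ε ↦ Σ_{i ≥ 1} (-1)^(i-1) ε^i / i`
(for `ε` supported on `G^{<1}`; junk value `0` otherwise). -/
def logOneUnit (ε : HahnSeries (gdual G) k) : HahnSeries (gdual G) k :=
  if hε : 0 < ε.orderTop then (logFamily ε hε).hsum else 0

/-- The canonical extension of an order-preserving embedding `ψ : G₁ → G₂` to the fields of
generalized power series, applying `ψ` to every monomial (junk value `0` if `ψ` is not
order-preserving). -/
def extMap {k : Type*} [Field k] [LinearOrder k] [IsStrictOrderedRing k] {G₁ G₂ : Type*} [CommGroup G₁] [LinearOrder G₁] [IsOrderedMonoid G₁]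
    [CommGroup G₂] [LinearOrder G₂] [IsOrderedMonoid G₂] (ψ : G₁ → G₂) :
    HahnSeries (gdual G₁) k → HahnSeries (gdual G₂) k :=
  if h : StrictMono ψ then
    HahnSeries.embDomain
      (OrderEmbedding.ofStrictMono (fun γ => toGd (ψ (toG γ)))
        (fun a b hab => show toGd (ψ (toG a)) < toGd (ψ (toG b)) from
          h (show toG b < toG a from hab)))
  else fun _ => 0

/-- The additive subgroup `k((G^{>1}))` of the series supported on `G^{>1}`. -/
def largeSeries (k : Type*) [Field k] [LinearOrder k] [IsStrictOrderedRing k] (G : Type*) [CommGroup G] [LinearOrder G] [IsOrderedMonoid G] :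
    AddSubgroup (HahnSeries (gdual G) k) where
  carrier := {f | ∀ γ ∈ f.support, γ < (0 : gdual G)}
  zero_mem' := by intro γ hγ; rw [HahnSeries.support_zero] at hγ; exact absurd hγ (Set.notMem_empty γ)
  add_mem' := by
    intro a b ha hb γ hγ
    rcases HahnSeries.support_add_subset _ _ hγ with h | h
    exacts [ha γ h, hb γ h]
  neg_mem' := by
    intro a ha γ hγ
    rw [HahnSeries.support_neg] at hγ
    exact ha γ hγ

theorem mem_largeSeries {f : HahnSeries (gdual G) k} :
    f ∈ largeSeries k G ↔ ∀ γ ∈ f.support, γ < (0 : gdual G) := Iff.rfl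

/-- `log : (k^{>0}, ·) → (k, +)` is an order-preserving group embedding. -/
structure IsResidueLog (lg : k → k) : Prop where
  map_mul : ∀ a b : k, 0 < a → 0 < b → lg (a * b) = lg a + lg b
  strictMonoOn : StrictMonoOn lg (Set.Ioi 0)

/-- A prelogarithmic section of `k((G))`: an order-preserving group embedding
`l : (G, ·) → (k((G^{>1})), +)`. -/
structure IsPrelogSection (l : G → HahnSeries (gdual G) k) : Prop where
  supp_large : ∀ g : G, l g ∈ largeSeries k G
  map_mul : ∀ g h : G, l (g * h) = l g + l h
  strictMono : StrictMono l

/-- The prelogarithm associated to a prelogarithmic section `l` and a logarithm `lg` on the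
residue field: `L(g·a·(1+ε)) = l(g) + log(a) + Σ (-1)^(i-1) ε^i/i`. -/
def prelogL (lg : k → k) (l : G → HahnSeries (gdual G) k)
    (α : HahnSeries (gdual G) k) : HahnSeries (gdual G) k :=
  l (toG α.order) + HahnSeries.C (lg α.leadingCoeff) +
    logOneUnit ((HahnSeries.single α.order α.leadingCoeff)⁻¹ * α - 1)

/-- The group of exponentials `G^# = e[k((G^{>1}))]`, a multiplicative copy of the ordered
additive group `k((G^{>1}))`. The element `e(α)` is `Multiplicative.ofAdd ⟨α, _⟩`. -/
abbrev Gsharp (k : Type*) [Field k] [LinearOrder k] [IsStrictOrderedRing k] (G : Type*) [CommGroup G] [LinearOrder G] [IsOrderedMonoid G] :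
    Type _ := Multiplicative ↥(largeSeries k G)

/-- The embedding `ι : G → G^#`, `ι(g) := e(l(g))`. -/
def iotaSharp (l : G → HahnSeries (gdual G) k) (hl : ∀ g, l g ∈ largeSeries k G) (g : G) :
    Gsharp k G :=
  Multiplicative.ofAdd (⟨l g, hl g⟩ : ↥(largeSeries k G))

/-- The prelogarithmic section `l^#` of `k((G^#))`: `l^#(e(α)) := ι(α)`, where
`ι : k((G)) → k((G^#))` is the canonical extension of `ι : G → G^#`. -/
def lsharpFun (l : G → HahnSeries (gdual G) k) (hl : ∀ g, l g ∈ largeSeries k G)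
    (x : Gsharp k G) : HahnSeries (gdual (Gsharp k G)) k :=
  extMap (iotaSharp l hl) ((Multiplicative.toAdd x : ↥(largeSeries k G)) : HahnSeries (gdual G) k)

/-- The induced map `ψ^# : G₁^# → G₂^#`, `ψ^#(e(α)) := e(ψ(α))` (junk value `1` if the
canonical extension of `ψ` does not map `k((G₁^{>1}))` into `k((G₂^{>1}))`). -/
def psiSharp {k : Type*} [Field k] [LinearOrder k] [IsStrictOrderedRing k] {G₁ G₂ : Type*} [CommGroup G₁] [LinearOrder G₁] [IsOrderedMonoid G₁]
    [CommGroup G₂] [LinearOrder G₂] [IsOrderedMonoid G₂] (ψ : G₁ → G₂) (x : Gsharp k G₁) : Gsharp k G₂ :=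
  if h : ∀ f ∈ largeSeries k G₁, extMap ψ f ∈ largeSeries k G₂ then
    Multiplicative.ofAdd
      (⟨extMap ψ ((Multiplicative.toAdd x : ↥(largeSeries k G₁)) : HahnSeries (gdual G₁) k),
        h _ (Multiplicative.toAdd x).2⟩ : ↥(largeSeries k G₂))
  else 1

/-- Condition (†) for subgroups `U ⊆ H` of `G`:
`l(H) < |f|` for every nonzero `f ∈ k((H^{>U}))`. -/
def CondDagger (l : G → HahnSeries (gdual G) k) (U H : Subgroup G) : Prop :=
  ∀ h ∈ H, ∀ f : HahnSeries (gdual G) k, f ≠ 0 →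
    (∀ γ ∈ f.support, toG γ ∈ H ∧ ∀ u ∈ U, u < toG γ) → l h < |f|

/-- The growth axiom for a subgroup `H` of `G`:
`l(H) < |f|` for every nonzero `f ∈ k((H^{>1}))`. -/
def GrowthAxiom (l : G → HahnSeries (gdual G) k) (H : Subgroup G) : Prop :=
  CondDagger l (⊥ : Subgroup G) H

theorem mem_large_of_gt {f : HahnSeries (gdual G) k} {U H : Subgroup G}
    (hf : ∀ γ ∈ f.support, toG γ ∈ H ∧ ∀ u ∈ U, u < toG γ) : f ∈ largeSeries k G :=
  fun γ hγ => show (1 : G) < toG γ from (hf γ hγ).2 1 U.one_mem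

/-- The set `H^{#,U} = ι(H)·e[k((H^{>U}))] ⊆ G^#`. -/
def sharpProdSet (l : G → HahnSeries (gdual G) k) (hl : ∀ g, l g ∈ largeSeries k G)
    (U H : Subgroup G) : Set (Gsharp k G) :=
  {x | ∃ h ∈ H, ∃ f : HahnSeries (gdual G) k,
    ∃ hf : ∀ γ ∈ f.support, toG γ ∈ H ∧ ∀ u ∈ U, u < toG γ,
    x = iotaSharp l hl h *
      Multiplicative.ofAdd (⟨f, mem_large_of_gt hf⟩ : ↥(largeSeries k G))}

end Series

section Hahn

variable (k : Type*) [Field k] [LinearOrder k] [IsStrictOrderedRing k] {Γ : Type*} [LinearOrder Γ]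

/-- The Hahn group `Γ^k` of formal products `∏_γ x_γ^(g γ)` with anti well-ordered support,
ordered anti-lexicographically, realized as the multiplicative copy of the additive group of
Hahn series over `Γᵒᵈ` with coefficients in `k`. -/
abbrev HahnGroup (Γ : Type*) [LinearOrder Γ] (k : Type*) [Field k] [LinearOrder k] [IsStrictOrderedRing k] : Type _ :=
  Multiplicative (HahnSeries Γᵒᵈ k)

/-- The monomial `x_γ` in the Hahn group `Γ^k`. -/
def xMon (γ : Γ) : HahnGroup Γ k :=
  Multiplicative.ofAdd (HahnSeries.single (OrderDual.toDual γ) (1 : k))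

/-- The prelogarithmic section `l_σ` on `k((Γ^k))` induced by `σ : Γ → Γ`:
`l_σ(∏_γ x_γ^(g γ)) := Σ_γ (g γ)·x_(σ γ)` (junk value `0` if `σ` is not strictly
order-preserving). -/
def sigmaSection (σ : Γ → Γ) :
    HahnGroup Γ k → HahnSeries (gdual (HahnGroup Γ k)) k :=
  if hσ : StrictMono σ then fun g =>
    HahnSeries.embDomain
      (OrderEmbedding.ofStrictMono
        (fun γ : Γᵒᵈ => toGd (xMon k (σ (OrderDual.ofDual γ))))
        (fun a b hab =>
          show toGd (xMon k (σ (OrderDual.ofDual a))) < toGd (xMon k (σ (OrderDual.ofDual b)))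
          from hahn_single_lt_single
            (show OrderDual.toDual (σ (OrderDual.ofDual a)) <
                OrderDual.toDual (σ (OrderDual.ofDual b)) from
              hσ (show OrderDual.ofDual b < OrderDual.ofDual a from hab))))
      (Multiplicative.toAdd g)
  else fun _ => 0

/-- The lift `ψ_σ : Γ^k → Γ^k` of `σ : Γ → Γ`, `ψ_σ(∏_γ x_γ^(g γ)) := ∏_γ x_(σ γ)^(g γ)`
(junk value `id` if `σ` is not strictly order-preserving). -/
def sigmaAuto (σ : Γ → Γ) : HahnGroup Γ k → HahnGroup Γ k :=
  if hσ : StrictMono σ then fun g =>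
    Multiplicative.ofAdd
      (HahnSeries.embDomain
        (OrderEmbedding.ofStrictMono
          (fun γ : Γᵒᵈ => OrderDual.toDual (σ (OrderDual.ofDual γ)))
          (fun a b hab =>
            show OrderDual.toDual (σ (OrderDual.ofDual a)) <
                OrderDual.toDual (σ (OrderDual.ofDual b)) from
              hσ (show OrderDual.ofDual b < OrderDual.ofDual a from hab)))
        (Multiplicative.toAdd g))
  else id

end Hahn


/-!
Every positive `α` factors as `α = g · a · (1 + ε)` with `g = v(α)`, `a > 0` its leading
coefficient and `ε` infinitesimal, and `L(α) = l(g) + log a + log(1 + ε)`. Hence any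
multiplicative map with the prescribed values on `G`, on `k^{>0}` and on the 1-units equals `L`,
and `L` itself takes these values.

Multiplicativity of `L` reduces to `log((1 + ε)(1 + δ)) = log(1 + ε) + log(1 + δ)`. At a fixed
exponent only finitely many `ε^i δ^j` contribute, so this follows from the polynomial fact that
`log_N(x + y + xy) - log_N(x) - log_N(y)` has no monomials of degree `≤ N`, where `log_N` is the
truncation of `log(1 + z)` at degree `N`: its constant term vanishes, and `(1 + x) ∂ₓ` of it is
`(-x)^N - (-(x + y + xy))^N`, while `1 + x` is invertible modulo every power of `(x, y)`.

Monotonicity follows from multiplicativity once `L(γ) > 0` for `γ > 1`, which is read off the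
dominant term among `l(g)`, `log a` and `log(1 + ε)`.
-/

namespace HahnSeries

section

variable {Γ : Type*} [LinearOrder Γ] {R : Type*} [Field R] [LinearOrder R] [IsStrictOrderedRing R]

theorem pos_iff {x : HahnSeries Γ R} : 0 < x ↔ 0 < x.leadingCoeff := by
  rw [hahn_lt_iff, sub_zero]

theorem pos_add_iff_of_orderTop_lt {x y : HahnSeries Γ R} (h : x.orderTop < y.orderTop) :
    0 < x + y ↔ 0 < x := by
  rw [pos_iff, pos_iff, leadingCoeff_add_eq_left h]

end

section

variable {Γ : Type*} [AddCommMonoid Γ] [LinearOrder Γ] {R : Type*} [Field R]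

theorem orderTop_one_add {ε : HahnSeries Γ R} (hε : 0 < ε.orderTop) :
    (1 + ε).orderTop = 0 := by
  rw [orderTop_add_eq_left (by rwa [orderTop_one]), orderTop_one]

theorem leadingCoeff_one_add {ε : HahnSeries Γ R} (hε : 0 < ε.orderTop) :
    (1 + ε).leadingCoeff = 1 := by
  rw [leadingCoeff_add_eq_left (by rwa [orderTop_one]), leadingCoeff_one]

theorem orderTop_add_pos {x y : HahnSeries Γ R} (hx : 0 < x.orderTop) (hy : 0 < y.orderTop) :
    0 < (x + y).orderTop :=
  (lt_min hx hy).trans_le min_orderTop_le_orderTop_add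

theorem one_add_pos [LinearOrder R] [IsStrictOrderedRing R] {ε : HahnSeries Γ R}
    (hε : 0 < ε.orderTop) : 0 < 1 + ε := by
  rw [pos_iff, leadingCoeff_one_add hε]
  exact one_pos

end

section

variable {Γ : Type*} [AddCommMonoid Γ] [LinearOrder Γ] [IsOrderedCancelAddMonoid Γ]
  {R : Type*} [Field R] [LinearOrder R] [IsStrictOrderedRing R]

instance : IsStrictOrderedRing (HahnSeries Γ R) :=
  haveI : ZeroLEOneClass (HahnSeries Γ R) := ⟨Or.inr (by simp)⟩
  .of_mul_pos fun x y hx hy => by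
    rw [pos_iff, leadingCoeff_mul] at *
    exact mul_pos hx hy

theorem C_pos_iff {r : R} : 0 < (C r : HahnSeries Γ R) ↔ 0 < r := by
  rw [pos_iff, C_apply, leadingCoeff_of_single]

theorem C_add_pos_iff {r : R} (hr : r ≠ 0) {y : HahnSeries Γ R} (hy : 0 < y.orderTop) :
    0 < C r + y ↔ 0 < r := by
  rw [pos_add_iff_of_orderTop_lt (by rwa [C_apply, orderTop_single hr]), C_pos_iff]

theorem lt_one_of_orderTop_pos {x : HahnSeries Γ R} (hx : 0 < x.orderTop) : x < 1 := by
  rw [← sub_pos, sub_eq_add_neg, ← C_one, C_add_pos_iff one_ne_zero (by rwa [orderTop_neg])]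
  exact one_pos

theorem one_lt_C_mul_one_add_iff {a : R} (ha : a ≠ 1) {ε : HahnSeries Γ R}
    (hε : 0 < ε.orderTop) : 1 < C a * (1 + ε) ↔ 1 < a := by
  have hCε : 0 < (C a * ε).orderTop := by
    rw [orderTop_mul]
    exact hε.trans_le (le_add_of_nonneg_left (C_apply (Γ := Γ) a ▸ orderTop_single_le))
  rw [← sub_pos, show C a * (1 + ε) - 1 = C (a - 1) + C a * ε by rw [map_sub, map_one]; ring,
    C_add_pos_iff (sub_ne_zero.2 ha) hCε, sub_pos]

theorem order_single_mul_one_add {g : Γ} {a : R} (ha : a ≠ 0) {ε : HahnSeries Γ R}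
    (hε : 0 < ε.orderTop) : (single g a * (1 + ε)).order = g := by
  have h : (single g a * (1 + ε)).orderTop = g := by
    rw [orderTop_mul, orderTop_single ha, orderTop_one_add hε, add_zero]
  have hne : single g a * (1 + ε) ≠ 0 := mul_ne_zero (single_ne_zero ha) (one_add_pos hε).ne'
  exact WithTop.coe_injective ((order_eq_orderTop_of_ne_zero hne).trans h)

theorem leadingCoeff_single_mul_one_add {g : Γ} {a : R} {ε : HahnSeries Γ R}
    (hε : 0 < ε.orderTop) : (single g a * (1 + ε)).leadingCoeff = a := by
  rw [leadingCoeff_mul, leadingCoeff_of_single, leadingCoeff_one_add hε, mul_one]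

end

section

variable {Γ : Type*} [AddCommGroup Γ] [LinearOrder Γ] [IsOrderedAddMonoid Γ]

theorem orderTop_mul_pos {R : Type*} [Field R] {x y : HahnSeries Γ R} (hx : 0 < x.orderTop)
    (hy : 0 < y.orderTop) : 0 < (x * y).orderTop := by
  rw [orderTop_mul]
  exact hx.trans_le (le_add_of_nonneg_right hy.le)

theorem exists_eq_single_mul_one_add_of_pos {R : Type*} [Field R] [LinearOrder R]
    [IsStrictOrderedRing R] {x : HahnSeries Γ R} (hx : 0 < x) :
    ∃ (g : Γ) (a : R) (ε : HahnSeries Γ R),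
      0 < a ∧ 0 < ε.orderTop ∧ x = single g a * (1 + ε) := by
  have hlc : x.leadingCoeff ≠ 0 := (pos_iff.1 hx).ne'
  refine ⟨x.order, x.leadingCoeff, single (-x.order) x.leadingCoeff⁻¹ * x - 1, pos_iff.1 hx,
    ?_, ?_⟩
  · rw [← neg_sub, orderTop_neg]
    exact unit_aux x (inv_mul_cancel₀ hlc) _ (neg_add_cancel x.order)
  · rw [add_sub_cancel, ← mul_assoc, single_mul_single, add_neg_cancel, mul_inv_cancel₀ hlc,
      single_zero_one, one_mul]

end

end HahnSeries

section LogTrunc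

variable (R : Type*) [Field R] {A : Type*} [Ring A] [Module R A]

def logTrunc (N : ℕ) (z : A) : A :=
  ∑ m ∈ Finset.range N, ((-1 : R) ^ m / (m + 1)) • z ^ (m + 1)

end LogTrunc

section LogTruncAlgebra

variable {R : Type*} [Field R] {A : Type*} [CommRing A] [Algebra R A]

theorem map_logTrunc {B : Type*} [CommRing B] [Algebra R B] (f : A →ₐ[R] B) (N : ℕ) (z : A) :
    f (logTrunc R N z) = logTrunc R N (f z) := by
  simp only [logTrunc, map_sum, map_smul, map_pow]

theorem logTrunc_mem {I : Ideal A} {z : A} (hz : z ∈ I) (N : ℕ) : logTrunc R N z ∈ I :=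
  I.sum_mem fun m _ => Submodule.smul_of_tower_mem _ _ (I.pow_mem_of_mem hz _ m.succ_pos)

theorem derivation_logTrunc [CharZero R] (D : Derivation R A A) (N : ℕ) (z : A) :
    D (logTrunc R N z) = (∑ m ∈ Finset.range N, (-z) ^ m) * D z := by
  simp only [logTrunc, map_sum, Finset.sum_mul]
  refine Finset.sum_congr rfl fun m _ => ?_
  have hm : ((-1 : R) ^ m / (m + 1)) * (m + 1 : ℕ) = (-1) ^ m := by
    push_cast
    exact div_mul_cancel₀ _ (Nat.cast_add_one_ne_zero m)
  rw [D.map_smul, D.leibniz_pow, Nat.add_sub_cancel, ← Nat.cast_smul_eq_nsmul R, smul_smul, hm,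
    Algebra.smul_def, smul_eq_mul, map_pow, map_neg, map_one]
  ring

end LogTruncAlgebra

theorem one_add_mul_geom_sum_neg {A : Type*} [CommRing A] (z : A) (N : ℕ) :
    (1 + z) * ∑ m ∈ Finset.range N, (-z) ^ m = 1 - (-z) ^ N := by
  rw [← mul_neg_geom_sum, sub_neg_eq_add]

theorem mem_pow_of_one_add_mul_mem_pow {A : Type*} [CommRing A] {I : Ideal A} {z q : A}
    (hz : z ∈ I) {N : ℕ} (h : (1 + z) * q ∈ I ^ N) : q ∈ I ^ N := by
  have hq : q = (1 + z) * q * ∑ m ∈ Finset.range N, (-z) ^ m + (-z) ^ N * q := by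
    linear_combination (-q) * one_add_mul_geom_sum_neg z N
  rw [hq]
  exact add_mem (Ideal.mul_mem_right _ _ h)
    (Ideal.mul_mem_right _ _ (Ideal.pow_mem_pow (neg_mem hz) N))

section LogFunctionalEquation

open MvPolynomial

variable {R : Type*} [Field R] [CharZero R]

theorem mem_pow_succ_idealOfVars_of_pderiv {σ : Type*} {P : MvPolynomial σ R} {N : ℕ}
    (h0 : P ∈ idealOfVars σ R) (h : ∀ i, pderiv i P ∈ idealOfVars σ R ^ N) :
    P ∈ idealOfVars σ R ^ (N + 1) := by
  rw [mem_pow_idealOfVars_iff']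
  intro d hd
  rcases eq_or_ne d 0 with rfl | hd0
  · rw [← pow_one (idealOfVars σ R), mem_pow_idealOfVars_iff'] at h0
    exact h0 0 (by simp)
  obtain ⟨i, hi⟩ : ∃ i, d i ≠ 0 := by simpa [Finsupp.ext_iff] using hd0
  obtain ⟨e, rfl⟩ : ∃ e, d = e + Finsupp.single i 1 :=
    ⟨_, (tsub_add_cancel_of_le (Finsupp.single_le_iff.2 (Nat.one_le_iff_ne_zero.2 hi))).symm⟩
  have he : e.degree < N := by
    rw [map_add, Finsupp.degree_single] at hd
    omega
  have hcoeff := coeff_pderiv (i := i) P e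
  rw [(mem_pow_idealOfVars_iff' _ _).1 (h i) e he, eq_comm, mul_eq_zero] at hcoeff
  exact hcoeff.resolve_right (Nat.cast_add_one_ne_zero _)

theorem one_add_X_mul_pderiv_logTrunc_sub (N : ℕ) (s : Bool) :
    (1 + X s) * pderiv s
      (logTrunc R N (X true + X false + X true * X false : MvPolynomial Bool R) -
        logTrunc R N (X true) - logTrunc R N (X false)) =
      (-X s) ^ N - (-(X true + X false + X true * X false)) ^ N := by
  have hgeom := one_add_mul_geom_sum_neg
    (X true + X false + X true * X false : MvPolynomial Bool R) N
  rw [map_sub, map_sub, derivation_logTrunc, derivation_logTrunc, derivation_logTrunc, map_add,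
    map_add, (pderiv s).leibniz]
  cases s
  · simp only [pderiv_X_self, pderiv_X_of_ne (by decide : true ≠ false), smul_eq_mul]
    linear_combination hgeom - one_add_mul_geom_sum_neg (X false : MvPolynomial Bool R) N
  · simp only [pderiv_X_self, pderiv_X_of_ne (by decide : false ≠ true), smul_eq_mul]
    linear_combination hgeom - one_add_mul_geom_sum_neg (X true : MvPolynomial Bool R) N

theorem logTrunc_add_add_mul_sub_mem_pow (N : ℕ) :
    logTrunc R N (X true + X false + X true * X false : MvPolynomial Bool R) -
      logTrunc R N (X true) - logTrunc R N (X false) ∈ idealOfVars Bool R ^ (N + 1) := by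
  have hX (s : Bool) : (X s : MvPolynomial Bool R) ∈ idealOfVars Bool R :=
    Ideal.subset_span ⟨s, rfl⟩
  have hA : X true + X false + X true * X false ∈ idealOfVars Bool R :=
    add_mem (add_mem (hX _) (hX _)) (Ideal.mul_mem_right _ _ (hX _))
  refine mem_pow_succ_idealOfVars_of_pderiv
    (sub_mem (sub_mem (logTrunc_mem hA N) (logTrunc_mem (hX _) N)) (logTrunc_mem (hX _) N))
    fun s => mem_pow_of_one_add_mul_mem_pow (hX s) ?_
  rw [one_add_X_mul_pderiv_logTrunc_sub]
  exact sub_mem (Ideal.pow_mem_pow (neg_mem (hX s)) N) (Ideal.pow_mem_pow (neg_mem hA) N)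

end LogFunctionalEquation

namespace HahnSeries

variable {Γ : Type*} [AddCommMonoid Γ] [PartialOrder Γ] [IsOrderedCancelAddMonoid Γ]
  {R : Type*} [Field R] {ε δ : HahnSeries Γ R} {γ : Γ} {N : ℕ}

theorem coeff_aeval_eq_zero_of_mem_pow_idealOfVars
    (hN : ∀ i j : ℕ, N < i + j → (ε ^ i * δ ^ j).coeff γ = 0) {P : MvPolynomial Bool R}
    (hP : P ∈ MvPolynomial.idealOfVars Bool R ^ (N + 1)) :
    (MvPolynomial.aeval (fun b : Bool => if b then ε else δ) P).coeff γ = 0 := by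
  rw [P.as_sum, map_sum, coeff_sum]
  refine Finset.sum_eq_zero fun d hd => ?_
  have hd := (MvPolynomial.mem_pow_idealOfVars_iff _ _).1 hP d hd
  rw [Finsupp.degree_eq_sum, Fintype.sum_bool] at hd
  rw [MvPolynomial.aeval_monomial, ← C_eq_algebraMap, C_mul_eq_smul, coeff_smul,
    Finsupp.prod_fintype _ _ fun _ => pow_zero _, Fintype.prod_bool, if_pos rfl,
    if_neg Bool.false_ne_true, hN _ _ hd, smul_zero]

theorem coeff_pow_add_add_mul_eq_zero
    (hN : ∀ i j : ℕ, N < i + j → (ε ^ i * δ ^ j).coeff γ = 0) {m : ℕ} (hm : N < m) :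
    ((ε + δ + ε * δ) ^ m).coeff γ = 0 := by
  have hX (b : Bool) : MvPolynomial.X b ∈ MvPolynomial.idealOfVars Bool R :=
    Ideal.subset_span ⟨b, rfl⟩
  have hA := add_mem (add_mem (hX true) (hX false))
    (Ideal.mul_mem_right (MvPolynomial.X false) _ (hX true))
  have := coeff_aeval_eq_zero_of_mem_pow_idealOfVars hN
    (Ideal.pow_le_pow_right hm (Ideal.pow_mem_pow hA m))
  simpa only [map_pow, map_add, map_mul, MvPolynomial.aeval_X, if_true, Bool.false_eq_true,
    if_false] using this

theorem coeff_logTrunc_add_add_mul [CharZero R]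
    (hN : ∀ i j : ℕ, N < i + j → (ε ^ i * δ ^ j).coeff γ = 0) :
    (logTrunc R N (ε + δ + ε * δ)).coeff γ =
      (logTrunc R N ε).coeff γ + (logTrunc R N δ).coeff γ := by
  have := coeff_aeval_eq_zero_of_mem_pow_idealOfVars hN (logTrunc_add_add_mul_sub_mem_pow N)
  simp only [map_sub, map_logTrunc, map_add, map_mul, MvPolynomial.aeval_X, coeff_sub] at this
  simpa [sub_sub, sub_eq_zero] using this

end HahnSeries

section LogOneUnit

variable {k : Type*} [Field k] {G : Type*} [CommGroup G] [LinearOrder G] [IsOrderedMonoid G]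

theorem logOneUnit_eq_hsum {ε : HahnSeries (gdual G) k} (hε : 0 < ε.orderTop) :
    logOneUnit ε = (logFamily ε hε).hsum :=
  dif_pos hε

theorem logFamily_apply {ε : HahnSeries (gdual G) k} (hε : 0 < ε.orderTop) (n : ℕ) :
    logFamily ε hε n = ((-1 : k) ^ n / (n + 1)) • ε ^ (n + 1) :=
  rfl

theorem logOneUnit_zero : logOneUnit (0 : HahnSeries (gdual G) k) = 0 := by
  ext γ
  rw [logOneUnit_eq_hsum (by simp), SummableFamily.coeff_hsum]
  simp [logFamily_apply]

theorem order_le_of_mem_support_logFamily {ε : HahnSeries (gdual G) k} (hε : 0 < ε.orderTop)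
    {n : ℕ} {γ : gdual G} (hγ : γ ∈ (logFamily ε hε n).support) : ε.order ≤ γ := by
  rw [logFamily_apply, mem_support, coeff_smul, smul_eq_mul] at hγ
  have h := order_le_of_coeff_ne_zero (right_ne_zero_of_mul hγ)
  rw [order_pow] at h
  calc ε.order = 1 • ε.order := (one_nsmul _).symm
    _ ≤ (n + 1) • ε.order := nsmul_le_nsmul_left (zero_le_orderTop_iff.1 hε.le) (by omega)
    _ ≤ γ := h

theorem coeff_logFamily_eq_zero {ε : HahnSeries (gdual G) k} (hε : 0 < ε.orderTop)
    (hne : ε ≠ 0) {n : ℕ} (hn : n ≠ 0) {γ : gdual G} (hγ : γ ≤ ε.order) :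
    (logFamily ε hε n).coeff γ = 0 := by
  rw [logFamily_apply, coeff_smul, coeff_eq_zero_of_lt_order, smul_zero]
  calc γ ≤ 1 • ε.order := by rwa [one_nsmul]
    _ < (n + 1) • ε.order := nsmul_lt_nsmul_left ((zero_lt_orderTop_iff hne).1 hε) (by omega)
    _ = (ε ^ (n + 1)).order := (order_pow _ _).symm

theorem orderTop_logOneUnit {ε : HahnSeries (gdual G) k} (hε : 0 < ε.orderTop) :
    (logOneUnit ε).orderTop = ε.orderTop := by
  rcases eq_or_ne ε 0 with rfl | hne
  · rw [logOneUnit_zero]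
  rw [logOneUnit_eq_hsum hε, ← order_eq_orderTop_of_ne_zero hne]
  refine SummableFamily.hsum_orderTop_of_le (a := 0) ?_
    (fun _ _ => order_le_of_mem_support_logFamily hε)
    (fun _ hn => coeff_logFamily_eq_zero hε hne hn le_rfl)
  simp [logFamily_apply, order_eq_orderTop_of_ne_zero hne]

theorem leadingCoeff_logOneUnit {ε : HahnSeries (gdual G) k} (hε : 0 < ε.orderTop) :
    (logOneUnit ε).leadingCoeff = ε.leadingCoeff := by
  rcases eq_or_ne ε 0 with rfl | hne
  · rw [logOneUnit_zero]
  rw [logOneUnit_eq_hsum hε, SummableFamily.hsum_leadingCoeff_of_le (a := 0) ?_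
    (fun _ _ => order_le_of_mem_support_logFamily hε)
    (fun _ hn => coeff_logFamily_eq_zero hε hne hn le_rfl)]
  · simp [logFamily_apply, leadingCoeff_eq]
  · simp [logFamily_apply, order_eq_orderTop_of_ne_zero hne]

theorem coeff_logOneUnit_eq_coeff_logTrunc {ε : HahnSeries (gdual G) k} (hε : 0 < ε.orderTop)
    {γ : gdual G} {N : ℕ} (h : ∀ m, N < m → (ε ^ m).coeff γ = 0) :
    (logOneUnit ε).coeff γ = (logTrunc k N ε).coeff γ := by
  rw [logOneUnit_eq_hsum hε, SummableFamily.coeff_hsum_eq_sum_of_subset (t := Finset.range N),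
    logTrunc, coeff_sum]
  · rfl
  · intro n hn
    by_contra hnN
    simp only [Finset.coe_range, Set.mem_Iio, not_lt] at hnN
    exact hn (by rw [logFamily_apply, coeff_smul, h _ (by omega), smul_zero])

theorem logOneUnit_add_add_mul [CharZero k] {ε δ : HahnSeries (gdual G) k} (hε : 0 < ε.orderTop)
    (hδ : 0 < δ.orderTop) : logOneUnit (ε + δ + ε * δ) = logOneUnit ε + logOneUnit δ := by
  ext γ
  obtain ⟨N, hN⟩ : ∃ N : ℕ,
      ∀ i j : ℕ, N < i + j → (ε ^ i * δ ^ j).coeff γ = 0 := by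
    have hfin := SummableFamily.finite_co_support_prod_mul (SummableFamily.powers ε)
      (SummableFamily.powers δ) γ
    simp only [SummableFamily.powers_of_orderTop_pos hε,
      SummableFamily.powers_of_orderTop_pos hδ] at hfin
    obtain ⟨N, hN⟩ :=
      ((Set.finite_coe_iff.1 hfin).image fun p : ℕ × ℕ => p.1 + p.2).bddAbove
    exact ⟨N, fun i j hij => by_contra fun h => hij.not_ge (hN ⟨(i, j), h, rfl⟩)⟩
  have hζ := orderTop_add_pos (orderTop_add_pos hε hδ) (orderTop_mul_pos hε hδ)
  rw [coeff_add,
    coeff_logOneUnit_eq_coeff_logTrunc hε (N := N) fun m hm => by simpa using hN m 0 (by omega),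
    coeff_logOneUnit_eq_coeff_logTrunc hδ (N := N) fun m hm => by simpa using hN 0 m (by omega),
    coeff_logOneUnit_eq_coeff_logTrunc hζ fun m hm => coeff_pow_add_add_mul_eq_zero hN hm,
    coeff_logTrunc_add_add_mul hN]

end LogOneUnit

section Prelog

variable {k : Type*} [Field k] [LinearOrder k] [IsStrictOrderedRing k]
  {G : Type*} [CommGroup G] [LinearOrder G] [IsOrderedMonoid G]

theorem toG_zero : toG (0 : gdual G) = 1 :=
  rfl

theorem toG_add (g h : gdual G) : toG (g + h) = toG g * toG h :=
  rfl

theorem IsResidueLog.map_one {lg : k → k} (hlg : IsResidueLog lg) : lg 1 = 0 := by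
  have h := hlg.map_mul 1 1 one_pos one_pos
  rwa [one_mul, left_eq_add] at h

theorem IsResidueLog.pos_of_one_lt {lg : k → k} (hlg : IsResidueLog lg) {a : k} (ha : 1 < a) :
    0 < lg a :=
  hlg.map_one ▸ hlg.strictMonoOn (Set.mem_Ioi.2 one_pos) (Set.mem_Ioi.2 (one_pos.trans ha)) ha

theorem IsPrelogSection.map_one {l : G → HahnSeries (gdual G) k} (hl : IsPrelogSection l) :
    l 1 = 0 := by
  have h := hl.map_mul 1 1
  rwa [one_mul, left_eq_add] at h

theorem IsPrelogSection.pos_of_one_lt {l : G → HahnSeries (gdual G) k} (hl : IsPrelogSection l)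
    {g : G} (hg : 1 < g) : 0 < l g :=
  hl.map_one ▸ hl.strictMono hg

theorem orderTop_lt_zero_of_mem_largeSeries {f : HahnSeries (gdual G) k}
    (hf : f ∈ largeSeries k G) (hne : f ≠ 0) : f.orderTop < 0 := by
  rw [← order_eq_orderTop_of_ne_zero hne, WithTop.coe_lt_zero]
  exact hf _ (coeff_order_eq_zero.not.2 hne)

theorem prelogL_single_mul_one_add (lg : k → k) (l : G → HahnSeries (gdual G) k) {g : gdual G}
    {a : k} (ha : a ≠ 0) {ε : HahnSeries (gdual G) k} (hε : 0 < ε.orderTop) :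
    prelogL lg l (single g a * (1 + ε)) = l (toG g) + C (lg a) + logOneUnit ε := by
  rw [prelogL, order_single_mul_one_add ha hε, leadingCoeff_single_mul_one_add hε,
    inv_mul_cancel_left₀ (single_ne_zero ha), add_sub_cancel_left]

variable {lg : k → k} {l : G → HahnSeries (gdual G) k}

theorem prelogL_mul (hlg : IsResidueLog lg) (hl : IsPrelogSection l)
    {α β : HahnSeries (gdual G) k} (hα : 0 < α) (hβ : 0 < β) :
    prelogL lg l (α * β) = prelogL lg l α + prelogL lg l β := by
  obtain ⟨g, a, ε, ha, hε, rfl⟩ := exists_eq_single_mul_one_add_of_pos hα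
  obtain ⟨h, b, δ, hb, hδ, rfl⟩ := exists_eq_single_mul_one_add_of_pos hβ
  have hprod : single g a * (1 + ε) * (single h b * (1 + δ)) =
      single (g + h) (a * b) * (1 + (ε + δ + ε * δ)) := by
    rw [← single_mul_single]
    ring
  rw [hprod, prelogL_single_mul_one_add lg l (mul_pos ha hb).ne'
      (orderTop_add_pos (orderTop_add_pos hε hδ) (orderTop_mul_pos hε hδ)),
    prelogL_single_mul_one_add lg l ha.ne' hε, prelogL_single_mul_one_add lg l hb.ne' hδ,
    logOneUnit_add_add_mul hε hδ, hlg.map_mul a b ha hb, map_add,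
    toG_add, hl.map_mul]
  abel

theorem prelogL_C (hl : IsPrelogSection l) {a : k} (ha : 0 < a) :
    prelogL lg l (C a) = C (lg a) := by
  rw [← mul_one (C a), ← add_zero 1, C_apply, prelogL_single_mul_one_add lg l ha.ne' (by simp),
    logOneUnit_zero, add_zero]
  rw [toG_zero, hl.map_one, zero_add]

theorem prelogL_single (hlg : IsResidueLog lg) (g : G) :
    prelogL lg l (single (toGd g) 1) = l g := by
  rw [show (single (toGd g) 1 : HahnSeries (gdual G) k) = single (toGd g) 1 * (1 + 0) by simp,
    prelogL_single_mul_one_add lg l one_ne_zero (by simp),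
    logOneUnit_zero, hlg.map_one, map_zero, add_zero, add_zero]
  rfl

theorem prelogL_one_add (hlg : IsResidueLog lg) (hl : IsPrelogSection l)
    {ε : HahnSeries (gdual G) k} (hε : 0 < ε.orderTop) :
    prelogL lg l (1 + ε) = logOneUnit ε := by
  rw [show 1 + ε = single 0 (1 : k) * (1 + ε) by simp,
    prelogL_single_mul_one_add lg l one_ne_zero hε, toG_zero, hl.map_one, hlg.map_one, map_zero,
    add_zero, zero_add]

theorem prelogL_pos_of_one_lt (hlg : IsResidueLog lg) (hl : IsPrelogSection l)
    {γ : HahnSeries (gdual G) k} (hγ : 1 < γ) : 0 < prelogL lg l γ := by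
  obtain ⟨g, a, ε, ha, hε, rfl⟩ := exists_eq_single_mul_one_add_of_pos (one_pos.trans hγ)
  have hlog := orderTop_logOneUnit hε
  rw [prelogL_single_mul_one_add lg l ha.ne' hε]
  rcases lt_trichotomy g 0 with hg | rfl | hg
  -- `gdual` reverses the order: `g < 0` means `1 < toG g`.
  · have hlpos : 0 < l (toG g) := hl.pos_of_one_lt hg
    have hrest : 0 ≤ (C (lg a) + logOneUnit ε).orderTop :=
      (le_min (C_apply (Γ := gdual G) (lg a) ▸ orderTop_single_le) (hlog ▸ hε.le)).trans
        min_orderTop_le_orderTop_add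
    rwa [add_assoc, pos_add_iff_of_orderTop_lt
      ((orderTop_lt_zero_of_mem_largeSeries (hl.supp_large _) hlpos.ne').trans_le hrest)]
  · rw [toG_zero, hl.map_one, zero_add]
    rw [← C_apply] at hγ
    rcases eq_or_ne a 1 with rfl | ha1
    · rw [map_one, one_mul, lt_add_iff_pos_right] at hγ
      rw [hlg.map_one, map_zero, zero_add, pos_iff, leadingCoeff_logOneUnit hε]
      exact pos_iff.1 hγ
    · have hlga := hlg.pos_of_one_lt ((one_lt_C_mul_one_add_iff ha1 hε).1 hγ)
      rwa [C_add_pos_iff hlga.ne' (hlog ▸ hε)]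
  · refine absurd hγ (lt_one_of_orderTop_pos ?_).not_gt
    rw [orderTop_mul, orderTop_single ha.ne', orderTop_one_add hε, add_zero]
    exact_mod_cast hg

theorem prelogL_lt_prelogL (hlg : IsResidueLog lg) (hl : IsPrelogSection l)
    {α β : HahnSeries (gdual G) k} (hα : 0 < α) (hαβ : α < β) :
    prelogL lg l α < prelogL lg l β := by
  have hq : 1 < β / α := (one_lt_div hα).2 hαβ
  calc prelogL lg l α < prelogL lg l α + prelogL lg l (β / α) :=
        lt_add_of_pos_right _ (prelogL_pos_of_one_lt hlg hl hq)
    _ = prelogL lg l β := by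
      rw [← prelogL_mul hlg hl hα (one_pos.trans hq), mul_div_cancel₀ _ hα.ne']

theorem eq_prelogL_of_map_mul (L : HahnSeries (gdual G) k → HahnSeries (gdual G) k)
    (hmul : ∀ α β : HahnSeries (gdual G) k, 0 < α → 0 < β → L (α * β) = L α + L β)
    (hC : ∀ a : k, 0 < a → L (C a) = C (lg a))
    (hsingle : ∀ g : G, L (single (toGd g) 1) = l g)
    (hone_add : ∀ ε : HahnSeries (gdual G) k, 0 < ε.orderTop → L (1 + ε) = logOneUnit ε)
    {α : HahnSeries (gdual G) k} (hα : 0 < α) : L α = prelogL lg l α := by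
  obtain ⟨g, a, ε, ha, hε, rfl⟩ := exists_eq_single_mul_one_add_of_pos hα
  have hCa : 0 < (C a : HahnSeries (gdual G) k) := C_pos_iff.2 ha
  rw [prelogL_single_mul_one_add lg l ha.ne' hε, add_assoc, ← hC a ha, ← hone_add ε hε,
    ← hmul _ _ hCa (one_add_pos hε), ← hsingle (toG g), ← hmul _ _ (hahn_single_pos _)
      (mul_pos hCa (one_add_pos hε)), ← mul_assoc, C_apply, single_mul_single, add_zero, one_mul]
  rfl

end Prelog

/-- Given an order-preserving group embedding `log : (k^{>0},·) → (k,+)`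
and a prelogarithmic section `l` of `k((G))`, the map `L = prelogL lg l`,
`L(g·a·(1+ε)) = l(g) + log a + Σ_{i≥1} (-1)^(i-1) ε^i/i`, is an order-preserving group
embedding `(k((G))^{>0},·) → (k((G)),+)`, and it is the unique such embedding extending
`log` on `k^{>0}`, agreeing with `l` on `G` and with the logarithm on 1-units on
`1 + k((G^{<1}))`. -/
theorem prelog_is_unique_embedding {k : Type*} [Field k] [LinearOrder k] [IsStrictOrderedRing k]
    {G : Type*} [CommGroup G] [LinearOrder G] [IsOrderedMonoid G]
    (lg : k → k) (hlg : IsResidueLog lg)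
    (l : G → HahnSeries (gdual G) k) (hl : IsPrelogSection l) :
    (∀ α β : HahnSeries (gdual G) k, 0 < α → 0 < β →
      prelogL lg l (α * β) = prelogL lg l α + prelogL lg l β) ∧
    (∀ α β : HahnSeries (gdual G) k, 0 < α → α < β →
      prelogL lg l α < prelogL lg l β) ∧
    (∀ a : k, 0 < a → prelogL lg l (HahnSeries.C a) = HahnSeries.C (lg a)) ∧
    (∀ g : G, prelogL lg l (HahnSeries.single (toGd g) (1 : k)) = l g) ∧
    (∀ ε : HahnSeries (gdual G) k, 0 < ε.orderTop →
      prelogL lg l (1 + ε) = logOneUnit ε) ∧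
    (∀ L' : HahnSeries (gdual G) k → HahnSeries (gdual G) k,
      (∀ α β : HahnSeries (gdual G) k, 0 < α → 0 < β → L' (α * β) = L' α + L' β) →
      (∀ α β : HahnSeries (gdual G) k, 0 < α → α < β → L' α < L' β) →
      (∀ a : k, 0 < a → L' (HahnSeries.C a) = HahnSeries.C (lg a)) →
      (∀ g : G, L' (HahnSeries.single (toGd g) (1 : k)) = l g) →
      (∀ ε : HahnSeries (gdual G) k, 0 < ε.orderTop → L' (1 + ε) = logOneUnit ε) →
      ∀ α : HahnSeries (gdual G) k, 0 < α → L' α = prelogL lg l α) :=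
  ⟨fun _ _ => prelogL_mul hlg hl,
    fun _ _ => prelogL_lt_prelogL hlg hl,
    fun _ => prelogL_C hl,
    prelogL_single hlg,
    fun _ => prelogL_one_add hlg hl,
    fun L hmul _ hC hsingle hone_add _ => eq_prelogL_of_map_mul L hmul hC hsingle hone_add⟩

end
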